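/- In a strongly continuous domain L, the sets ⇑_s u for u ∈ L form a basis for the strong Scott topology, and for every subset X ⊆ L, int_{σ_s(L)} X = ⋃{⇑_s u : ⇑_s u ⊆ X}. -/

import Mathlib

open Set

variable {L : Type*}

/-- A directed subset: nonempty and directed under `≤`. -/
def DirSet [Preorder L] (D : Set L) : Prop := D.Nonempty ∧ DirectedOn (· ≤ ·) D

/-- Strongly Scott open sets (the family `σ^s(L)`). -/
def StronglyScottOpen [Preorder L] [SupSet L] (U : Set L) : Prop :=
  IsUpperSet U ∧ ∀ D : Set L, DirSet D → ∀ x : L,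
    Ici (sSup D) ∩ Ici x ⊆ U → ∃ d ∈ D, Ici d ∩ Ici x ⊆ U

/-- The strong Scott topology `σ_s(L)`, generated by the strongly Scott open sets. -/
def strongScott (L : Type*) [Preorder L] [SupSet L] : TopologicalSpace L :=
  TopologicalSpace.generateFrom {U | StronglyScottOpen U}

/-- Scott open sets. -/
def ScottOpen [Preorder L] [SupSet L] (U : Set L) : Prop :=
  IsUpperSet U ∧ ∀ D : Set L, DirSet D → sSup D ∈ U → (D ∩ U).Nonempty

/-- The Scott topology `σ(L)`. -/
def scottTop (L : Type*) [Preorder L] [SupSet L] : TopologicalSpace L :=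
  TopologicalSpace.generateFrom {U | ScottOpen U}

/-- The upper topology `υ(L)`. -/
def upperTop (L : Type*) [Preorder L] : TopologicalSpace L :=
  TopologicalSpace.generateFrom {U | ∃ x : L, U = (Iic x)ᶜ}

/-- The lower topology `ω(L)`. -/
def lowerTop (L : Type*) [Preorder L] : TopologicalSpace L :=
  TopologicalSpace.generateFrom {U | ∃ x : L, U = (Ici x)ᶜ}

/-- The strong way-below relation `x ≪_s y`. -/
def SWayBelow [Preorder L] (x y : L) : Prop :=
  ∀ D : Set L, DirSet D → ∀ a : L,
    (⋂ d ∈ D, Ici d) ∩ Ici a ⊆ Ici y → ∃ d ∈ D, Ici d ∩ Ici a ⊆ Ici x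

/-- The way-below relation `x ≪ y`. -/
def WayBelow [Preorder L] [SupSet L] (x y : L) : Prop :=
  ∀ D : Set L, DirSet D → y ≤ sSup D → ∃ d ∈ D, x ≤ d

/-- `X` with topology `t` is a C-space (w.r.t. the order of `L`). -/
def IsCSpace [Preorder L] (t : TopologicalSpace L) : Prop :=
  ∀ U : Set L, @IsOpen _ (t) U → ∀ x ∈ U, ∃ y ∈ U,
    x ∈ @interior L t (Ici y) ∧ Ici y ⊆ U

/-- `L` is a strongly continuous domain. -/
def StronglyContinuousDomain (L : Type*) [Preorder L] [SupSet L] : Prop :=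
  IsCSpace (strongScott L)

/-- `L` is a continuous domain. -/
def ContinuousDomain (L : Type*) [Preorder L] [SupSet L] : Prop :=
  ∀ x : L, DirSet {y | WayBelow y x} ∧ IsLUB {y | WayBelow y x} x

/-- `L` is a hypercontinuous domain. -/
def HypercontinuousDomain (L : Type*) [Preorder L] : Prop :=
  ∀ x : L, DirSet {y | x ∈ @interior L (upperTop L) (Ici y)} ∧
    IsLUB {y | x ∈ @interior L (upperTop L) (Ici y)} x

/-- The strong Lawson topology `λ_s(L)`: common refinement of `σ_s(L)` and `ω(L)`. -/
def strongLawson (L : Type*) [Preorder L] [SupSet L] : TopologicalSpace L :=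
  TopologicalSpace.generateFrom
    {U | @IsOpen _ (strongScott L) U ∨ @IsOpen _ (lowerTop L) U}

/-! Let `t` be a C-space topology in which every `(↓w)ᶜ` is open. Then `y` lies below every
upper bound of the directed set `{z | y ∈ int ↑z}`, so feeding that set into the definition of
`u ≪_s y` puts `y` in `int ↑u`. Conversely, strongly Scott open sets are closed under finite
intersections, hence a basis of `σ_s(L)`, and their defining property is literally the strong
way-below condition. Hence `⇑_s u = int ↑u` in `σ_s(L)`, and the C-space property says exactly
that these interiors form a basis whose members inside `X` cover `int X`. -/

open TopologicalSpace

section CSpace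

variable [Preorder L]

variable [TopologicalSpace L]

theorem IsCSpace.dirSet_interior_Ici (hC : IsCSpace ‹TopologicalSpace L›) (y : L) :
    DirSet {z | y ∈ interior (Ici z)} := by
  obtain ⟨z₀, -, hz₀, -⟩ := hC univ isOpen_univ y (mem_univ y)
  refine ⟨⟨z₀, hz₀⟩, fun z₁ hz₁ z₂ hz₂ => ?_⟩
  obtain ⟨z, -, hyz, hz⟩ :=
    hC _ (isOpen_interior.inter isOpen_interior) y ⟨hz₁, hz₂⟩
  obtain ⟨hz₁z, hz₂z⟩ := hz self_mem_Ici
  exact ⟨z, hyz, interior_subset hz₁z, interior_subset hz₂z⟩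

theorem IsCSpace.le_of_forall_mem_interior_Ici_le (hC : IsCSpace ‹TopologicalSpace L›)
    (hIic : ∀ w : L, IsOpen (Iic w)ᶜ) {y w : L}
    (hw : ∀ z, y ∈ interior (Ici z) → z ≤ w) : y ≤ w := by
  by_contra hyw
  obtain ⟨z, hzw, hyz, -⟩ := hC _ (hIic w) y hyw
  exact hzw (hw z hyz)

theorem IsCSpace.mem_interior_Ici_of_sWayBelow (hC : IsCSpace ‹TopologicalSpace L›)
    (hIic : ∀ w : L, IsOpen (Iic w)ᶜ) {u y : L} (h : SWayBelow u y) :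
    y ∈ interior (Ici u) := by
  have hD := hC.dirSet_interior_Ici y
  obtain ⟨a, ha⟩ := hD.1
  have hub : (⋂ z ∈ {z | y ∈ interior (Ici z)}, Ici z) ∩ Ici a ⊆ Ici y := fun w hw =>
    hC.le_of_forall_mem_interior_Ici_le hIic fun z hz => mem_iInter₂.1 hw.1 z hz
  obtain ⟨z, hz, hzu⟩ := h _ hD a hub
  have hya : y ∈ interior (Ici z ∩ Ici a) := by
    rw [interior_inter]
    exact ⟨hz, ha⟩
  exact interior_mono hzu hya

theorem IsCSpace.isTopologicalBasis_interior_Ici (hC : IsCSpace ‹TopologicalSpace L›) :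
    IsTopologicalBasis {S : Set L | ∃ u, S = interior (Ici u)} := by
  refine isTopologicalBasis_of_isOpen_of_nhds ?_ fun x U hxU hU => ?_
  · rintro _ ⟨u, rfl⟩
    exact isOpen_interior
  · obtain ⟨v, -, hxv, hvU⟩ := hC U hU x hxU
    exact ⟨_, ⟨v, rfl⟩, hxv, interior_subset.trans hvU⟩

theorem IsCSpace.interior_eq_biUnion_interior_Ici (hC : IsCSpace ‹TopologicalSpace L›)
    (X : Set L) :
    interior X = ⋃ u ∈ {u : L | interior (Ici u) ⊆ X}, interior (Ici u) := by
  refine Subset.antisymm (fun x hx => ?_)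
    (iUnion₂_subset fun u hu => interior_maximal hu isOpen_interior)
  obtain ⟨v, -, hxv, hvX⟩ := hC _ isOpen_interior x hx
  exact mem_iUnion₂.2 ⟨v, interior_subset.trans (hvX.trans interior_subset), hxv⟩

end CSpace

section StronglyScottOpen

variable [Preorder L] [SupSet L]

theorem StronglyScottOpen.univ : StronglyScottOpen (univ : Set L) :=
  ⟨isUpperSet_univ, fun _ hD _ _ => ⟨_, hD.1.some_mem, subset_univ _⟩⟩

theorem StronglyScottOpen.inter {U V : Set L}
    (hU : StronglyScottOpen U) (hV : StronglyScottOpen V) : StronglyScottOpen (U ∩ V) := by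
  refine ⟨hU.1.inter hV.1, fun D hD x h => ?_⟩
  obtain ⟨d₁, hd₁, h₁⟩ := hU.2 D hD x (h.trans inter_subset_left)
  obtain ⟨d₂, hd₂, h₂⟩ := hV.2 D hD x (h.trans inter_subset_right)
  obtain ⟨d, hd, hd₁d, hd₂d⟩ := hD.2 d₁ hd₁ d₂ hd₂
  exact ⟨d, hd, fun z hz =>
    ⟨h₁ ⟨hd₁d.trans hz.1, hz.2⟩, h₂ ⟨hd₂d.trans hz.1, hz.2⟩⟩⟩

theorem isTopologicalBasis_stronglyScottOpen :
    @IsTopologicalBasis L (strongScott L) {U | StronglyScottOpen U} := by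
  simpa only [insert_eq_of_mem (show univ ∈ {U : Set L | StronglyScottOpen U} from .univ)] using
    @isTopologicalBasis_of_subbasis_of_inter L (strongScott L) _ rfl fun _ hU _ hV => hU.inter hV

end StronglyScottOpen

section CompletePartialOrder

variable [CompletePartialOrder L]

theorem DirSet.biInter_Ici {D : Set L} (hD : DirSet D) : ⋂ d ∈ D, Ici d = Ici (sSup D) := by
  ext z
  simp only [mem_iInter₂, mem_Ici]
  exact (isLUB_le_iff hD.2.isLUB_sSup).symm

theorem stronglyScottOpen_compl_Iic (w : L) : StronglyScottOpen (Iic w)ᶜ := by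
  refine ⟨(isLowerSet_Iic w).compl, fun D hD x h => ?_⟩
  by_contra! hD_le
  have hbound : ∀ d ∈ D, d ≤ w ∧ x ≤ w := fun d hd => by
    obtain ⟨z, ⟨hdz, hxz⟩, hzw⟩ := not_subset.1 (hD_le d hd)
    exact ⟨hdz.trans (not_not.1 hzw), hxz.trans (not_not.1 hzw)⟩
  obtain ⟨d₀, hd₀⟩ := hD.1
  exact h ⟨hD.2.sSup_le fun d hd => (hbound d hd).1, (hbound d₀ hd₀).2⟩ le_rfl

theorem StronglyScottOpen.sWayBelow {W : Set L} (hW : StronglyScottOpen W) {u y : L}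
    (hy : y ∈ W) (hWu : W ⊆ Ici u) : SWayBelow u y := by
  intro D hD a hsub
  rw [hD.biInter_Ici] at hsub
  obtain ⟨d, hd, hdW⟩ := hW.2 D hD a (hsub.trans (hW.1.Ici_subset hy))
  exact ⟨d, hd, hdW.trans hWu⟩

theorem setOf_sWayBelow_eq_interior_Ici (hL : StronglyContinuousDomain L) (u : L) :
    {y | SWayBelow u y} = @interior L (strongScott L) (Ici u) := by
  let _ := strongScott L
  ext y
  refine ⟨hL.mem_interior_Ici_of_sWayBelow fun w => .basic _ (stronglyScottOpen_compl_Iic w),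
    fun hy => ?_⟩
  obtain ⟨W, hW, hyW, hWu⟩ :=
    isTopologicalBasis_stronglyScottOpen.exists_subset_of_mem_open hy isOpen_interior
  exact hW.sWayBelow hyW (hWu.trans interior_subset)

end CompletePartialOrder

theorem sWayBelow_sets_basis_and_interior [CompletePartialOrder L]
    (hL : StronglyContinuousDomain L) :
    @TopologicalSpace.IsTopologicalBasis L (strongScott L)
      {S : Set L | ∃ u : L, S = {y | SWayBelow u y}} ∧
    ∀ X : Set L, @interior L (strongScott L) X =
      ⋃ u ∈ {u : L | {y | SWayBelow u y} ⊆ X}, {y | SWayBelow u y} := by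
  let _ := strongScott L
  simp only [setOf_sWayBelow_eq_interior_Ici hL]
  exact ⟨hL.isTopologicalBasis_interior_Ici, hL.interior_eq_biUnion_interior_Ici⟩
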